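/- If v is a vertex of degree 1 in G with unique neighbor w, then Q(G;x,y) = (1+x)·Q(G−v;x,y) + x(y−1)·Q(G−{v,w};x,y). -/

import Mathlib

/-!
Split the subsets `A ⊆ V` according to whether they contain `v`; those avoiding `v` give
`Q(G - v)`. For `B ⊆ V \ {v}`, adding the pendant vertex `v` to `B` leaves the number of
components unchanged when `w ∈ B` (removing a leaf disconnects nothing) and adds one isolated
component when `w ∉ B`. Hence the sets containing `v` contribute
`x · Q(G - v) + x (y - 1) · Q(G - {v, w})`.
-/

open Finset
open scoped Classical

noncomputable def numComponents {V : Type*} (G : SimpleGraph V) : ℕ :=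
  Nat.card G.ConnectedComponent

/-- The subgraph component polynomial `Q(G;x,y) = ∑_{A ⊆ V} x^|A| y^{k(G[A])}`. -/
noncomputable def Q {V : Type*} [Fintype V] (G : SimpleGraph V) (x y : ℝ) : ℝ :=
  ∑ A : Finset V, x ^ A.card * y ^ numComponents (G.induce (A : Set V))


namespace SimpleGraph

variable {V W : Type*}

theorem numComponents_congr {G : SimpleGraph V} {H : SimpleGraph W} (e : G ≃g H) :
    numComponents G = numComponents H :=
  Nat.card_congr e.connectedComponentEquiv

theorem numComponents_induce_induce (G : SimpleGraph V) (s : Set V) (t : Set s) :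
    numComponents ((G.induce s).induce t) = numComponents (G.induce (Subtype.val '' t)) := by
  let ι : (G.induce s).induce t ↪g G := (Embedding.induce s).comp (Embedding.induce t)
  have hι : Set.range ι = Subtype.val '' t := by
    rw [show ⇑ι = Subtype.val ∘ Subtype.val from rfl, Set.range_comp, Subtype.range_coe]
  rw [numComponents_congr (Embedding.isoInduceRange ι), hι]

theorem Reachable.apply_eq_of_forall_adj {G : SimpleGraph V} {β : Sort*} {f : V → β}
    (hf : ∀ a b, G.Adj a b → f a = f b) {a b : V} (h : G.Reachable a b) : f a = f b := by
  obtain ⟨p⟩ := h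
  induction p with
  | nil => rfl
  | cons hadj _ ih => exact (hf _ _ hadj).trans ih

section DeleteVertex

variable {H : SimpleGraph V} {v w : V}

theorem injective_map_induce_ne (h : H.neighborSet v ⊆ {w}) :
    Function.Injective (ConnectedComponent.map (Embedding.induce {u | u ≠ v}).toHom :
      (H.induce {u | u ≠ v}).ConnectedComponent → H.ConnectedComponent) := by
  set H' := H.induce {u | u ≠ v}
  -- `f` retracts `H` onto `H'` by sending `v` to the component of its neighbour `w`, if any.
  let f : V → Option H'.ConnectedComponent := fun u =>
    if hu : u = v then
      if hw : H.Adj v w then some (H'.connectedComponentMk ⟨w, hw.ne'⟩) else none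
    else some (H'.connectedComponentMk ⟨u, hu⟩)
  have hf_v : ∀ b, H.Adj v b → f v = f b := by
    intro b hb
    obtain rfl : b = w := h hb
    simp [f, hb, hb.ne']
  have hf : ∀ a b, H.Adj a b → f a = f b := by
    intro a b hab
    by_cases ha : a = v
    · subst ha; exact hf_v b hab
    by_cases hb : b = v
    · subst hb; exact (hf_v a hab.symm).symm
    simpa [f, ha, hb] using ConnectedComponent.connectedComponentMk_eq_of_adj
      (show H'.Adj ⟨a, ha⟩ ⟨b, hb⟩ from hab)
  refine ConnectedComponent.ind₂ fun ⟨a, ha⟩ ⟨b, hb⟩ hab => ConnectedComponent.sound ?_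
  have := (ConnectedComponent.exact hab).apply_eq_of_forall_adj hf
  simpa [f, show a ≠ v from ha, show b ≠ v from hb] using this

theorem numComponents_induce_ne_of_neighborSet_eq_singleton (h : H.neighborSet v = {w}) :
    numComponents (H.induce {u | u ≠ v}) = numComponents H := by
  refine Nat.card_eq_of_bijective _ ⟨injective_map_induce_ne h.subset, ?_⟩
  have hw : H.Adj v w := by simp [← mem_neighborSet, h]
  refine ConnectedComponent.ind fun u => ?_
  by_cases hu : u = v
  · subst hu
    exact ⟨(H.induce _).connectedComponentMk ⟨w, hw.ne'⟩,
      ConnectedComponent.connectedComponentMk_eq_of_adj hw.symm⟩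
  · exact ⟨(H.induce _).connectedComponentMk ⟨u, hu⟩, rfl⟩

theorem numComponents_eq_numComponents_induce_ne_add_one [Finite V]
    (h : H.neighborSet v = ∅) :
    numComponents H = numComponents (H.induce {u | u ≠ v}) + 1 := by
  have hrange : Set.range (ConnectedComponent.map (Embedding.induce {u | u ≠ v}).toHom) =
      {c | c ≠ H.connectedComponentMk v} := by
    ext c
    constructor
    · rintro ⟨c', rfl⟩
      induction c' using ConnectedComponent.ind with | h u => ?_
      obtain ⟨u, hu : u ≠ v⟩ := u
      intro huv
      obtain ⟨p⟩ : H.Reachable v u := ConnectedComponent.exact huv.symm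
      cases p with
      | nil => exact hu rfl
      | cons hadj _ => simpa [h] using (mem_neighborSet H v _).mpr hadj
    · induction c using ConnectedComponent.ind with | h u => ?_
      intro hu
      exact ⟨(H.induce _).connectedComponentMk ⟨u, fun huv => hu (huv ▸ rfl)⟩, rfl⟩
  rw [numComponents, numComponents,
    ← Nat.card_congr (Equiv.optionSubtypeNe (H.connectedComponentMk v)), Finite.card_option,
    ← Nat.card_range_of_injective (injective_map_induce_ne (w := v) (by simp [h])), hrange]
  rfl

end DeleteVertex

section InsertVertex

variable {G : SimpleGraph V} {s : Set V} {v w : V}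

theorem numComponents_induce_induce_insert_ne (hv : v ∉ s) :
    numComponents ((G.induce (insert v s)).induce {u | u ≠ ⟨v, s.mem_insert v⟩}) =
      numComponents (G.induce s) := by
  have himage : Subtype.val '' {u : ↥(insert v s) | u ≠ ⟨v, s.mem_insert v⟩} = s := by
    ext u
    simp only [Set.mem_image, Set.mem_ofPred_eq, Subtype.exists, Set.mem_insert_iff]
    grind
  rw [numComponents_induce_induce, himage]

theorem neighborSet_induce_insert :
    (G.induce (insert v s)).neighborSet ⟨v, s.mem_insert v⟩ =
      Subtype.val ⁻¹' (G.neighborSet v ∩ s) := by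
  ext ⟨u, hu⟩
  simp only [neighborSet_induce, Set.mem_preimage, Set.mem_inter_iff, iff_self_and]
  intro huv
  exact (hu : u = v ∨ u ∈ s).resolve_left (G.ne_of_adj huv).symm

theorem numComponents_induce_insert_of_neighborSet_inter_eq_singleton (hv : v ∉ s)
    (h : G.neighborSet v ∩ s = {w}) :
    numComponents (G.induce (insert v s)) = numComponents (G.induce s) := by
  have hw : w ∈ s := (h ▸ Set.mem_singleton w : w ∈ G.neighborSet v ∩ s).2
  have hN : (G.induce (insert v s)).neighborSet ⟨v, s.mem_insert v⟩ = {⟨w, .inr hw⟩} := by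
    rw [neighborSet_induce_insert, h]
    ext ⟨u, hu⟩
    simp [Subtype.ext_iff]
  rw [← numComponents_induce_induce_insert_ne hv,
    numComponents_induce_ne_of_neighborSet_eq_singleton hN]

theorem numComponents_induce_insert_of_neighborSet_inter_eq_empty [Finite s] (hv : v ∉ s)
    (h : G.neighborSet v ∩ s = ∅) :
    numComponents (G.induce (insert v s)) = numComponents (G.induce s) + 1 := by
  have hN : (G.induce (insert v s)).neighborSet ⟨v, s.mem_insert v⟩ = ∅ := by
    rw [neighborSet_induce_insert, h, Set.preimage_empty]
  rw [← numComponents_induce_induce_insert_ne hv,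
    numComponents_eq_numComponents_induce_ne_add_one hN]

end InsertVertex

end SimpleGraph

open SimpleGraph

section SubgraphComponentPolynomial

variable {V : Type*} (G : SimpleGraph V) (x y : ℝ)

noncomputable def subgraphWeight (A : Finset V) : ℝ :=
  x ^ #A * y ^ numComponents (G.induce (A : Set V))

theorem Q_eq_sum_subgraphWeight [Fintype V] : Q G x y = ∑ A, subgraphWeight G x y A := rfl

theorem Q_induce (s : Set V) [Fintype s] :
    Q (G.induce s) x y = ∑ A ∈ s.toFinset.powerset, subgraphWeight G x y A := by
  refine Finset.sum_nbij' (fun B => B.map (Function.Embedding.subtype _))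
    (fun A => A.subtype (· ∈ s)) ?_ ?_ ?_ ?_ ?_
  · exact fun B _ =>
      Finset.mem_powerset.mpr (Set.subset_toFinset.mpr (Finset.map_subtype_subset B))
  · exact fun _ _ => Finset.mem_univ _
  · intro B _
    ext
    simp
  · intro A hA
    exact Finset.subtype_map_of_mem fun u hu => by simpa using Finset.mem_powerset.mp hA hu
  · intro B _
    rw [subgraphWeight, Finset.card_map, numComponents_induce_induce, Finset.coe_map]
    rfl

variable {G x y} {v w : V} {A : Finset V}

theorem subgraphWeight_insert_of_neighborSet_inter_eq_empty (hv : v ∉ A)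
    (h : G.neighborSet v ∩ A = ∅) :
    subgraphWeight G x y (insert v A) = x * y * subgraphWeight G x y A := by
  rw [subgraphWeight, subgraphWeight, Finset.coe_insert,
    numComponents_induce_insert_of_neighborSet_inter_eq_empty (by simpa using hv) h,
    Finset.card_insert_of_notMem hv]
  ring

theorem subgraphWeight_insert_of_neighborSet_inter_eq_singleton (hv : v ∉ A)
    (h : G.neighborSet v ∩ A = {w}) :
    subgraphWeight G x y (insert v A) = x * subgraphWeight G x y A := by
  rw [subgraphWeight, subgraphWeight, Finset.coe_insert,
    numComponents_induce_insert_of_neighborSet_inter_eq_singleton (by simpa using hv) h,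
    Finset.card_insert_of_notMem hv]
  ring

theorem sum_powerset_insert_subgraphWeight_of_neighborSet_eq_singleton
    (hvw : G.neighborSet v = {w}) (hv : v ∉ A) (hw : w ∈ A) :
    ∑ B ∈ (insert v A).powerset, subgraphWeight G x y B =
      (1 + x) * ∑ B ∈ A.powerset, subgraphWeight G x y B
        + x * (y - 1) * ∑ B ∈ (A.erase w).powerset, subgraphWeight G x y B := by
  obtain ⟨A', hwA', rfl⟩ : ∃ A', w ∉ A' ∧ A = insert w A' :=
    ⟨A.erase w, Finset.notMem_erase w A, (Finset.insert_erase hw).symm⟩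
  have hvA' : v ∉ A' := fun h => hv (Finset.mem_insert_of_mem h)
  have h_isolated : ∀ B ∈ A'.powerset,
      subgraphWeight G x y (insert v B) = x * y * subgraphWeight G x y B := fun B hB =>
    subgraphWeight_insert_of_neighborSet_inter_eq_empty
      (Finset.notMem_of_mem_powerset_of_notMem hB hvA')
      (by simpa [hvw] using Finset.notMem_of_mem_powerset_of_notMem hB hwA')
  have h_pendant : ∀ B ∈ A'.powerset,
      subgraphWeight G x y (insert v (insert w B)) = x * subgraphWeight G x y (insert w B) :=
    fun B hB => subgraphWeight_insert_of_neighborSet_inter_eq_singleton (w := w)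
      (fun h => hv (Finset.insert_subset_insert w (Finset.mem_powerset.mp hB) h))
      (by simp [hvw])
  rw [Finset.sum_powerset_insert hv, Finset.sum_powerset_insert hwA',
    Finset.sum_powerset_insert hwA',
    Finset.sum_congr rfl h_isolated, Finset.sum_congr rfl h_pendant, ← Finset.mul_sum,
    ← Finset.mul_sum, Finset.erase_insert hwA']
  ring

end SubgraphComponentPolynomial

theorem stmt5 {V : Type*} [Fintype V] (G : SimpleGraph V) (v w : V)
    (hvw : G.neighborSet v = {w}) (x y : ℝ) :
    Q G x y =
      (1 + x) * Q (G.induce {u : V | u ≠ v}) x y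
        + x * (y - 1) * Q (G.induce {u : V | u ≠ v ∧ u ≠ w}) x y := by
  have hadj : G.Adj v w := by simp [← mem_neighborSet, hvw]
  have hv : v ∉ Finset.univ.erase v := Finset.notMem_erase v Finset.univ
  have hw : w ∈ Finset.univ.erase v := Finset.mem_erase.mpr ⟨hadj.ne', Finset.mem_univ w⟩
  have h_erase_v : ({u | u ≠ v} : Set V).toFinset = Finset.univ.erase v := by ext; simp
  have h_erase_vw :
      ({u | u ≠ v ∧ u ≠ w} : Set V).toFinset = (Finset.univ.erase v).erase w := by
    ext; simp [and_comm]
  rw [Q_induce, Q_induce, h_erase_v, h_erase_vw,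
    ← sum_powerset_insert_subgraphWeight_of_neighborSet_eq_singleton hvw hv hw,
    Finset.insert_erase (Finset.mem_univ v), Finset.powerset_univ, Q_eq_sum_subgraphWeight]
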